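/- arXiv:0805.1270 — 5 statements merged into one kernel-verified Lean document; each statement's English description precedes it below -/
import Mathlib

section
/- Let k ≥ 2 and let (i_1, ..., i_{k-1}) ∈ {0,1}^{k-1}. Suppose n_1, ..., n_k are positive integers such that √n_1 + (-1)^{i_1}√n_2 + ... + (-1)^{i_{k-1}}√n_k ≠ 0. Then |√n_1 + (-1)^{i_1}√n_2 + ... + (-1)^{i_{k-1}}√n_k| ≥ c · max(n_1,...,n_k)^{-(2^{k-2} - 1/2)} for some constant c > 0 depending only on k. -/
/-!
Write the sum as `S = r₀ + r₁ + ⋯ + r_{m-1}` with `r_j = ±√n_j`, and let `P` be the product of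
the `2^(m-1)` conjugates `r₀ ± r₁ ± ⋯ ± r_{m-1}`. Multiplying `P` by its image under `r₀ ↦ -r₀`
gives an integer polynomial expression in the `n_j`, which equals `±P²`; so if `P ≠ 0` then
`|P| ≥ 1`, while `P / S` is a product of `2^(m-1) - 1` conjugates, each at most `m √N`.
If instead some conjugate vanishes, subtracting it from `S` leaves `S = 2 S'` where `S'` is the sum
of a sublist of `r₁, …, r_{m-1}`, and induction on the number of terms applies.
-/

open Polynomial

/-- `conjProd [r₁, …, rₘ] x` is the product of `x ± r₁ ± ⋯ ± rₘ` over all `2^m` sign patterns. -/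
noncomputable def conjProd : List ℝ → ℝ → ℝ
  | [], x => x
  | r :: l, x => conjProd l (x + r) * conjProd l (x - r)

lemma abs_conjProd_neg (l : List ℝ) (x : ℝ) : |conjProd l (-x)| = |conjProd l x| := by
  induction l generalizing x with
  | nil => exact abs_neg x
  | cons r l ih =>
    rw [conjProd, conjProd, abs_mul, abs_mul, show -x + r = -(x - r) by ring,
      show -x - r = -(x + r) by ring, ih, ih, mul_comm]

lemma List.sum_map_abs_nonneg (l : List ℝ) : 0 ≤ (l.map abs).sum :=
  List.sum_nonneg (by simp)

lemma abs_conjProd_le {l : List ℝ} {x B : ℝ} (h : |x| + (l.map abs).sum ≤ B) :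
    |conjProd l x| ≤ B ^ 2 ^ l.length := by
  induction l generalizing x with
  | nil => simpa [conjProd] using h
  | cons r l ih =>
    rw [List.map_cons, List.sum_cons, ← add_assoc] at h
    have hB : 0 ≤ B := (add_nonneg (by positivity) (List.sum_map_abs_nonneg _)).trans h
    have hadd : |x + r| + (l.map abs).sum ≤ B := by linarith [abs_add_le x r]
    have hsub : |x - r| + (l.map abs).sum ≤ B := by linarith [abs_sub x r]
    calc |conjProd (r :: l) x| = |conjProd l (x + r)| * |conjProd l (x - r)| := abs_mul _ _
      _ ≤ B ^ 2 ^ l.length * B ^ 2 ^ l.length :=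
        mul_le_mul (ih hadd) (ih hsub) (abs_nonneg _) (by positivity)
      _ = B ^ 2 ^ (r :: l).length := by rw [← pow_add, List.length_cons, pow_succ, mul_two]

lemma abs_conjProd_le_mul {l : List ℝ} {x B : ℝ} (h : |x| + (l.map abs).sum ≤ B) :
    |conjProd l x| ≤ |x + l.sum| * B ^ (2 ^ l.length - 1) := by
  induction l generalizing x with
  | nil => simp [conjProd]
  | cons r l ih =>
    rw [List.map_cons, List.sum_cons, ← add_assoc] at h
    have hB : 0 ≤ B := (add_nonneg (by positivity) (List.sum_map_abs_nonneg _)).trans h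
    have hadd : |x + r| + (l.map abs).sum ≤ B := by linarith [abs_add_le x r]
    have hsub : |x - r| + (l.map abs).sum ≤ B := by linarith [abs_sub x r]
    calc |conjProd (r :: l) x| = |conjProd l (x + r)| * |conjProd l (x - r)| := abs_mul _ _
      _ ≤ |x + r + l.sum| * B ^ (2 ^ l.length - 1) * B ^ 2 ^ l.length :=
        mul_le_mul (ih hadd) (abs_conjProd_le hsub) (abs_nonneg _) (by positivity)
      _ = |x + (r :: l).sum| * B ^ (2 ^ (r :: l).length - 1) := by
        have : 1 ≤ 2 ^ l.length := Nat.one_le_two_pow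
        rw [mul_assoc, ← pow_add, List.sum_cons, ← add_assoc, List.length_cons, pow_succ]
        congr 2
        omega

lemma exists_sublist_of_conjProd_eq_zero {l : List ℝ} {x : ℝ} (h : conjProd l x = 0) :
    ∃ l' : List ℝ, l'.Sublist l ∧ x + l.sum = 2 * l'.sum := by
  induction l generalizing x with
  | nil => exact ⟨[], .slnil, by simpa [conjProd] using h⟩
  | cons r l ih =>
    rcases mul_eq_zero.1 h with h | h
    · obtain ⟨l', hl', hsum⟩ := ih h
      exact ⟨l', hl'.cons r, by rw [List.sum_cons, ← hsum]; ring⟩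
    · obtain ⟨l', hl', hsum⟩ := ih h
      refine ⟨r :: l', hl'.cons_cons r, ?_⟩
      rw [List.sum_cons, List.sum_cons]
      linear_combination hsum

lemma exists_aeval_add_eq (d : ℤ) (p : ℤ[X]) : ∃ a b : ℤ[X], ∀ s x : ℝ, s ^ 2 = d →
    aeval (x + s) p = aeval x a + s * aeval x b := by
  induction p using Polynomial.induction_on with
  | C c => exact ⟨C c, 0, fun s x _ => by simp⟩
  | add p q hp hq =>
    obtain ⟨a, b, hab⟩ := hp
    obtain ⟨a', b', hab'⟩ := hq
    exact ⟨a + a', b + b', fun s x hs => by simp only [map_add, hab s x hs, hab' s x hs]; ring⟩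
  | monomial m c h =>
    obtain ⟨a, b, hab⟩ := h
    refine ⟨X * a + (d : ℤ[X]) * b, a + X * b, fun s x hs => ?_⟩
    rw [pow_succ, ← mul_assoc, map_mul, hab s x hs]
    simp only [map_add, map_mul, aeval_X, map_intCast]
    linear_combination aeval x b * hs

lemma exists_conjProd_eq_aeval {l : List ℝ} (hl : ∀ r ∈ l, ∃ d : ℤ, r ^ 2 = d) :
    ∃ q : ℤ[X], ∀ x, conjProd l x = aeval x q := by
  induction l with
  | nil => exact ⟨X, by simp [conjProd]⟩
  | cons r l ih =>
    obtain ⟨d, hd⟩ := hl r List.mem_cons_self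
    obtain ⟨q, hq⟩ := ih fun r' hr' => hl r' (List.mem_cons_of_mem r hr')
    obtain ⟨a, b, hab⟩ := exists_aeval_add_eq d q
    refine ⟨a ^ 2 - (d : ℤ[X]) * b ^ 2, fun x => ?_⟩
    rw [conjProd, hq, hq, sub_eq_add_neg, hab r x hd, hab (-r) x (by rw [neg_sq, hd])]
    simp only [map_sub, map_mul, map_pow, map_intCast]
    linear_combination (-aeval x b ^ 2) * hd

lemma exists_conjProd_zero_eq_intCast {l : List ℝ} (hl : ∀ r ∈ l, ∃ d : ℤ, r ^ 2 = d) :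
    ∃ z : ℤ, conjProd l 0 = z := by
  obtain ⟨q, hq⟩ := exists_conjProd_eq_aeval hl
  exact ⟨q.coeff 0, by rw [hq, ← coeff_zero_eq_aeval_zero', algebraMap_int_eq, eq_intCast]⟩

lemma one_le_abs_conjProd {r : ℝ} {l : List ℝ} (hl : ∀ s ∈ r :: l, ∃ d : ℤ, s ^ 2 = d)
    (h : conjProd l r ≠ 0) : 1 ≤ |conjProd l r| := by
  obtain ⟨z, hz⟩ := exists_conjProd_zero_eq_intCast hl
  have hsq : |(z : ℝ)| = |conjProd l r| ^ 2 := by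
    rw [← hz, conjProd, zero_add, zero_sub, abs_mul, abs_conjProd_neg, sq]
  have hz0 : z ≠ 0 := by
    rintro rfl
    exact h (by simpa using hsq.symm)
  rw [← one_le_sq_iff_one_le_abs, ← sq_abs, ← hsq]
  exact_mod_cast Int.one_le_abs hz0

lemma mul_pow_two_pow_pred_le {b : ℝ} (hb : 1 ≤ b) {m' m : ℕ} (hm : 1 ≤ m) (h : m' ≤ m) :
    ((m' : ℝ) * b) ^ (2 ^ (m' - 1) - 1) ≤ ((m : ℝ) * b) ^ (2 ^ (m - 1) - 1) := by
  have hmb : 1 ≤ (m : ℝ) * b := one_le_mul_of_one_le_of_one_le (by exact_mod_cast hm) hb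
  calc ((m' : ℝ) * b) ^ (2 ^ (m' - 1) - 1) ≤ ((m : ℝ) * b) ^ (2 ^ (m' - 1) - 1) := by gcongr
    _ ≤ ((m : ℝ) * b) ^ (2 ^ (m - 1) - 1) :=
        pow_le_pow_right₀ hmb (Nat.sub_le_sub_right (Nat.pow_le_pow_right two_pos (by omega)) 1)

theorem one_le_abs_sum_mul_pow {b : ℝ} (hb : 1 ≤ b) {l : List ℝ}
    (hl : ∀ r ∈ l, (∃ d : ℤ, r ^ 2 = d) ∧ |r| ≤ b) (hS : l.sum ≠ 0) :
    1 ≤ |l.sum| * ((l.length : ℝ) * b) ^ (2 ^ (l.length - 1) - 1) := by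
  induction hm : l.length using Nat.strong_induction_on generalizing l with
  | _ m ih =>
  obtain _ | ⟨r, l⟩ := l
  · exact absurd List.sum_nil hS
  rw [List.sum_cons] at hS ⊢
  by_cases hP : conjProd l r = 0
  · obtain ⟨l', hsub, hsum⟩ := exists_sublist_of_conjProd_eq_zero hP
    rw [hsum] at hS ⊢
    have hlt : l'.length < m := hm ▸ hsub.length_le.trans_lt (Nat.lt_succ_self _)
    have ih' := ih _ hlt (fun s hs => hl s (List.mem_cons_of_mem r (hsub.subset hs)))
      (right_ne_zero_of_mul hS) rfl
    calc 1 ≤ |l'.sum| * ((l'.length : ℝ) * b) ^ (2 ^ (l'.length - 1) - 1) := ih'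
      _ ≤ |2 * l'.sum| * ((m : ℝ) * b) ^ (2 ^ (m - 1) - 1) := by
        rw [abs_mul, abs_two]
        gcongr
        · linarith [abs_nonneg l'.sum]
        · exact mul_pow_two_pow_pred_le hb (by omega) hlt.le
  · have hB : |r| + (l.map abs).sum ≤ (m : ℝ) * b := by
      have := List.sum_le_card_nsmul ((r :: l).map abs) b (by simpa using fun s hs => (hl s hs).2)
      simpa [← hm, nsmul_eq_mul] using this
    calc 1 ≤ |conjProd l r| := one_le_abs_conjProd (fun s hs => (hl s hs).1) hP
      _ ≤ |r + l.sum| * ((m : ℝ) * b) ^ (2 ^ l.length - 1) := abs_conjProd_le_mul hB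
      _ = |r + l.sum| * ((m : ℝ) * b) ^ (2 ^ (m - 1) - 1) := by
        rw [← hm, List.length_cons, Nat.add_sub_cancel]

lemma sqrt_pow_two_pow_pred_sub_one {x : ℝ} (hx : 0 ≤ x) {k : ℕ} (hk : 2 ≤ k) :
    √x ^ (2 ^ (k - 1) - 1) = x ^ ((2 : ℝ) ^ (k - 2) - 1 / 2) := by
  have hexp : ((2 ^ (k - 1) - 1 : ℕ) : ℝ) = 2 * (2 : ℝ) ^ (k - 2) - 1 := by
    obtain ⟨j, rfl⟩ := Nat.exists_eq_add_of_le hk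
    rw [show 2 + j - 1 = j + 1 by omega, Nat.cast_sub Nat.one_le_two_pow]
    push_cast [pow_succ, Nat.add_sub_cancel_left]
    ring
  rw [Real.sqrt_eq_rpow, ← Real.rpow_natCast, ← Real.rpow_mul hx, hexp]
  ring_nf

theorem signed_sqrt_sum_lower_bound (k : ℕ) (hk : 2 ≤ k) :
    ∃ c > (0:ℝ), ∀ i : Fin k → ℕ, i ⟨0, by omega⟩ = 0 → (∀ j, i j ≤ 1) →
      ∀ n : Fin k → ℕ, (∀ j, 0 < n j) →
      (∑ j, (-1 : ℝ) ^ (i j) * Real.sqrt (n j)) ≠ 0 →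
      c * ((Finset.univ.sup n : ℕ) : ℝ) ^ (-((2:ℝ) ^ (k - 2) - 1/2)) ≤
        |∑ j, (-1 : ℝ) ^ (i j) * Real.sqrt (n j)| := by
  refine ⟨((k : ℝ) ^ (2 ^ (k - 1) - 1))⁻¹, by positivity, fun i _ _ n hpos hS => ?_⟩
  set N := Finset.univ.sup n
  have hN : 1 ≤ N := (hpos ⟨0, by omega⟩).trans_le (Finset.le_sup (Finset.mem_univ _))
  set l := List.ofFn fun j => (-1 : ℝ) ^ (i j) * √(n j) with hl
  have hterms : ∀ r ∈ l, (∃ d : ℤ, r ^ 2 = d) ∧ |r| ≤ √N :=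
    List.forall_mem_ofFn_iff.2 fun j =>
      ⟨⟨n j, by simp [mul_pow, ← pow_mul, pow_mul']⟩,
        by simpa [abs_mul, abs_of_nonneg (Real.sqrt_nonneg _)] using Finset.le_sup (Finset.mem_univ j)⟩
  have key := one_le_abs_sum_mul_pow (Real.one_le_sqrt.2 (by exact_mod_cast hN)) hterms
    (by rwa [hl, List.sum_ofFn])
  rw [hl, List.sum_ofFn, List.length_ofFn] at key
  rw [Real.rpow_neg (Nat.cast_nonneg N), ← sqrt_pow_two_pow_pred_sub_one (Nat.cast_nonneg N) hk,
    ← mul_inv, ← mul_pow, inv_le_iff_one_le_mul₀ (by positivity)]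
  exact key
end

section
/- Let 1 ≤ l < k be integers and let n_1, ..., n_k be positive integers satisfying √n_1 + ... + √n_l = √n_{l+1} + ... + √n_k. Then n_1 + n_2 + ... + n_k is even. -/
/-!
The normalized trace `-(minpoly ℚ x).nextCoeff / deg (minpoly ℚ x)` of real algebraic numbers
extends to a `ℚ`-linear functional `T : ℝ → ℚ`, and `T √m` is `√m` for a perfect square `m` and
`0` otherwise. Squaring `∑_{i ∈ s} √nᵢ = ∑_{i ∈ t} √nᵢ` and applying `T` gives
`∑_{i,j ∈ s} T √(nᵢnⱼ) = ∑_{i,j ∈ t} T √(nᵢnⱼ)`, a sum of natural numbers, symmetric in `i, j`,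
with diagonal `∑ nᵢ`. So it is congruent to `∑_{i ∈ s} nᵢ` modulo 2, and the two sides of the
equation have sums of the same parity.
-/

open Polynomial

theorem minpoly.eq_X_pow_two_sub_C {K L : Type*} [Field K] [Ring L] [IsDomain L] [Algebra K L]
    {x : L} {a : K} (hx : x ^ 2 = algebraMap K L a) (hxK : x ∉ (algebraMap K L).range) :
    minpoly K x = X ^ 2 - C a := by
  have hmonic : (X ^ 2 - C a).Monic := monic_X_pow_sub_C a two_ne_zero
  have hdvd : minpoly K x ∣ X ^ 2 - C a := minpoly.dvd K x (by simp [hx])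
  have hint : IsIntegral K x := ⟨_, hmonic, by simp [hx]⟩
  refine (eq_of_monic_of_dvd_of_natDegree_le (minpoly.monic hint) hmonic hdvd ?_).symm
  rw [natDegree_X_pow_sub_C]
  exact (minpoly.two_le_natDegree_iff hint).2 hxK

theorem exists_linearMap_real_extending_normalizedTrace :
    ∃ T : ℝ →ₗ[ℚ] ℚ, ∀ x : ℝ, IsIntegral ℚ x →
      T x = ((minpoly ℚ x).natDegree : ℚ)⁻¹ * -(minpoly ℚ x).nextCoeff := by
  let E := algebraicClosure ℚ ℝ
  have : Algebra.IsIntegral ℚ E :=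
    ⟨fun x => (isIntegral_algebraMap_iff (algebraMap E ℝ).injective).1 x.2⟩
  obtain ⟨T, hT⟩ := LinearMap.exists_extend (p := E.toSubalgebra.toSubmodule)
    (Algebra.normalizedTrace ℚ E)
  refine ⟨T, fun x hx => ?_⟩
  have hTx : T x = Algebra.normalizedTrace ℚ E ⟨x, hx⟩ := LinearMap.congr_fun hT ⟨x, hx⟩
  rw [Algebra.normalizedTrace_minpoly,
    ← minpoly.algebraMap_eq (algebraMap E ℝ).injective ⟨x, hx⟩] at hTx
  exact hTx

theorem exists_linearMap_sqrt_natCast : ∃ T : ℝ →ₗ[ℚ] ℚ,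
    ∀ m : ℕ, T √m = ((if IsSquare m then m.sqrt else 0 : ℕ) : ℚ) := by
  obtain ⟨T, hT⟩ := exists_linearMap_real_extending_normalizedTrace
  refine ⟨T, fun m => ?_⟩
  split_ifs with hm
  · obtain ⟨r, rfl⟩ := hm
    have hsqrt : √((r * r : ℕ) : ℝ) = algebraMap ℚ ℝ r := by
      push_cast; simp [Real.sqrt_mul_self]
    rw [hsqrt, hT _ isIntegral_algebraMap, minpoly.eq_X_sub_C, Nat.sqrt_eq, natDegree_X_sub_C,
      nextCoeff_X_sub_C]
    simp
  · have hsq : √(m : ℝ) ^ 2 = algebraMap ℚ ℝ m := by simp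
    have hirr : √(m : ℝ) ∉ (algebraMap ℚ ℝ).range := by
      rintro ⟨q, hq⟩
      exact irrational_sqrt_natCast_iff.2 hm ⟨q, by simpa using hq⟩
    have hint : IsIntegral ℚ √(m : ℝ) :=
      ⟨_, monic_X_pow_sub_C (m : ℚ) two_ne_zero, by simp [hsq]⟩
    have hdeg : (X ^ 2 - C (m : ℚ)).natDegree = 2 := natDegree_X_pow_sub_C
    rw [hT _ hint, minpoly.eq_X_pow_two_sub_C hsq hirr, nextCoeff_of_natDegree_pos (by omega), hdeg]
    simp

theorem Finset.sum_sum_modEq_two_sum_diag {ι : Type*} (s : Finset ι) {f : ι → ι → ℕ}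
    (hf : ∀ i j, f i j = f j i) : ∑ i ∈ s, ∑ j ∈ s, f i j ≡ ∑ i ∈ s, f i i [MOD 2] := by
  classical
  induction s using Finset.induction_on with
  | empty => rfl
  | insert a s ha ih =>
    have hcross : ∑ i ∈ s, f i a = ∑ j ∈ s, f a j := Finset.sum_congr rfl fun i _ => hf i a
    simp only [Finset.sum_insert ha, Finset.sum_add_distrib, hcross]
    unfold Nat.ModEq at ih ⊢
    omega

theorem even_sum_iff_of_sum_sqrt_eq {ι : Type*} {s t : Finset ι} {n : ι → ℕ}
    (h : ∑ i ∈ s, √(n i : ℝ) = ∑ i ∈ t, √(n i : ℝ)) :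
    Even (∑ i ∈ s, n i) ↔ Even (∑ i ∈ t, n i) := by
  obtain ⟨T, hT⟩ := exists_linearMap_sqrt_natCast
  set g : ℕ → ℕ := fun m => if IsSquare m then m.sqrt else 0
  have hg : ∀ a, g (a * a) = a := fun a => by simp [g, Nat.sqrt_eq]
  have hsq : ∀ u : Finset ι,
      T ((∑ i ∈ u, √(n i : ℝ)) ^ 2) = ((∑ i ∈ u, ∑ j ∈ u, g (n i * n j) : ℕ) : ℚ) := by
    intro u
    simp only [sq, Finset.sum_mul_sum, ← Real.sqrt_mul (Nat.cast_nonneg _), ← Nat.cast_mul,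
      map_sum, hT, Nat.cast_sum]
    rfl
  have hdiag : ∀ u : Finset ι, ∑ i ∈ u, ∑ j ∈ u, g (n i * n j) ≡ ∑ i ∈ u, n i [MOD 2] := by
    intro u
    simpa only [hg] using
      u.sum_sum_modEq_two_sum_diag (f := fun i j => g (n i * n j)) fun i j => by rw [mul_comm]
  have hst : ∑ i ∈ s, ∑ j ∈ s, g (n i * n j) = ∑ i ∈ t, ∑ j ∈ t, g (n i * n j) := by
    exact_mod_cast (hsq s).symm.trans (h ▸ hsq t)
  have := (hdiag s).symm.trans (hst ▸ hdiag t)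
  simp only [Nat.even_iff]
  unfold Nat.ModEq at this
  omega

theorem sum_even_of_sqrt_eq_general (k l : ℕ) (hlk : l < k) (n : ℕ → ℕ)
    (heq : ∑ j ∈ Finset.Icc 1 l, Real.sqrt (n j)
         = ∑ j ∈ Finset.Icc (l+1) k, Real.sqrt (n j)) :
    Even (∑ j ∈ Finset.Icc 1 k, n j) := by
  have hsplit := Finset.sum_Ioc_consecutive n (Nat.zero_le l) hlk.le
  simp only [← Finset.Icc_add_one_left_eq_Ioc, zero_add] at hsplit
  rw [← hsplit, Nat.even_add]
  exact even_sum_iff_of_sum_sqrt_eq heq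

theorem sum_even_of_sqrt_eq (k l : ℕ) (hl : 1 ≤ l) (hlk : l < k) (n : ℕ → ℕ)
    (hpos : ∀ j ∈ Finset.Icc 1 k, 0 < n j)
    (heq : ∑ j ∈ Finset.Icc 1 l, Real.sqrt (n j)
         = ∑ j ∈ Finset.Icc (l+1) k, Real.sqrt (n j)) :
    Even (∑ j ∈ Finset.Icc 1 k, n j) :=
  sum_even_of_sqrt_eq_general k l hlk n heq
end

section
/- The square roots of distinct squarefree positive integers are linearly independent over the rationals: if h_1, ..., h_s are distinct squarefree positive integers and q_1, ..., q_s are rational numbers with q_1√h_1 + ... + q_s√h_s = 0, then q_1 = ... = q_s = 0. -/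
/-!
Let `K_P = ℚ(√p : p ∈ P)` for a finite set `P` of primes; every element of `K_{P ∪ {r}}` is
`a + b √r` with `a, b ∈ K_P`. By induction on `P`, `∏_{p ∈ Q} √p ∉ K_P` for every set `Q` of
primes not contained in `P`: squaring `a + b √r = ∏_{p ∈ Q} √p` forces `a b = 0`, and either case
is a smaller instance. In particular `√r ∉ K_P`, so a vanishing `ℚ`-combination of the products
`∏_{p ∈ Q} √p` with `Q ⊆ P ∪ {r}`, written as `A + B √r` with `A, B ∈ K_P`, splits into two
vanishing combinations over subsets of `P`. Finally `√n = ∏_{p ∣ n} √p` for squarefree `n`.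
-/

open IntermediateField Polynomial

theorem Algebra.exists_add_mul_eq_of_mem_adjoin_singleton {R A : Type*} [CommSemiring R]
    [CommSemiring A] [Algebra R A] {x : A} {c : R} (hc : x ^ 2 = algebraMap R A c) {y : A}
    (hy : y ∈ Algebra.adjoin R {x}) : ∃ a b : R, algebraMap R A a + algebraMap R A b * x = y := by
  induction hy using Algebra.adjoin_induction with
  | mem z hz => exact ⟨0, 1, by simp [Set.mem_singleton_iff.mp hz]⟩
  | algebraMap a => exact ⟨a, 0, by simp⟩
  | add _ _ _ _ hy hz =>
    obtain ⟨⟨a, b, rfl⟩, ⟨a', b', rfl⟩⟩ := And.intro hy hz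
    exact ⟨a + a', b + b', by simp only [map_add]; ring⟩
  | mul _ _ _ _ hy hz =>
    obtain ⟨⟨a, b, rfl⟩, ⟨a', b', rfl⟩⟩ := And.intro hy hz
    exact ⟨a * a' + b * b' * c, a * b' + b * a', by simp only [map_add, map_mul, ← hc]; ring⟩

theorem IntermediateField.exists_add_mul_eq_of_mem_adjoin_simple {K L : Type*} [Field K]
    [Field L] [Algebra K L] {x : L} {c : K} (hc : x ^ 2 = algebraMap K L c) {y : L}
    (hy : y ∈ K⟮x⟯) : ∃ a b : K, algebraMap K L a + algebraMap K L b * x = y := by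
  have hx : IsIntegral K x :=
    ⟨X ^ 2 - C c, monic_X_pow_sub_C c two_ne_zero, by simp [hc]⟩
  rw [← mem_toSubalgebra, adjoin_simple_toSubalgebra_of_isAlgebraic hx.isAlgebraic] at hy
  exact Algebra.exists_add_mul_eq_of_mem_adjoin_singleton hc hy

theorem eq_zero_of_add_mul_eq_zero_of_notMem {L S : Type*} [Field L] [SetLike S L]
    [SubfieldClass S L] {K : S} {a b x : L} (ha : a ∈ K) (hb : b ∈ K) (hx : x ∉ K)
    (h : a + b * x = 0) : b = 0 := by
  by_contra hb0
  refine hx ?_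
  rw [show x = -a / b by field_simp; linear_combination h]
  exact div_mem (neg_mem ha) hb

theorem irrational_prod_sqrt_of_prime {Q : Finset ℕ} (hQ : ∀ p ∈ Q, p.Prime) (hne : Q.Nonempty) :
    Irrational (∏ p ∈ Q, √(p : ℝ)) := by
  rw [← Real.sqrt_prod _ fun _ _ => Nat.cast_nonneg _, ← Nat.cast_prod,
    irrational_sqrt_natCast_iff]
  have hsf : Squarefree (∏ p ∈ Q, p) :=
    Finset.squarefree_prod_of_pairwise_isCoprime
      (fun p hp q hq hpq => Nat.coprime_iff_isRelPrime.mp <|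
        (Nat.coprime_primes (hQ p hp) (hQ q hq)).mpr hpq)
      fun p hp => (hQ p hp).squarefree
  obtain ⟨q, hq⟩ := hne
  rintro ⟨k, hk⟩
  have hk1 : k = 1 := Nat.isUnit_iff.mp (hsf k (hk ▸ dvd_rfl))
  have hq1 : q ∣ 1 := by simpa [hk, hk1] using Finset.dvd_prod_of_mem (fun p : ℕ => p) hq
  exact (hQ q hq).one_lt.ne' (Nat.dvd_one.mp hq1)

noncomputable def adjoinSqrt (P : Finset ℕ) : IntermediateField ℚ ℝ :=
  adjoin ℚ ((fun p : ℕ => √(p : ℝ)) '' P)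

theorem sqrt_mem_adjoinSqrt {P : Finset ℕ} {p : ℕ} (hp : p ∈ P) : √(p : ℝ) ∈ adjoinSqrt P :=
  subset_adjoin _ _ ⟨p, hp, rfl⟩

theorem prod_sqrt_mem_adjoinSqrt {P Q : Finset ℕ} (hQP : Q ⊆ P) :
    ∏ p ∈ Q, √(p : ℝ) ∈ adjoinSqrt P :=
  prod_mem fun _ hp => sqrt_mem_adjoinSqrt (hQP hp)

theorem adjoinSqrt_empty : adjoinSqrt ∅ = ⊥ := by simp [adjoinSqrt]

theorem restrictScalars_adjoin_sqrt_eq_adjoinSqrt_insert (P : Finset ℕ) (r : ℕ) :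
    (adjoinSqrt P)⟮√(r : ℝ)⟯.restrictScalars ℚ = adjoinSqrt (insert r P) := by
  refine (restrictScalars_adjoin ℚ (adjoinSqrt P) {√(r : ℝ)}).trans ?_
  rw [Set.union_singleton, adjoinSqrt, adjoin_insert_adjoin, adjoinSqrt, Finset.coe_insert,
    Set.image_insert_eq]

theorem exists_add_mul_sqrt_eq_of_mem_adjoinSqrt_insert {P : Finset ℕ} {r : ℕ} {y : ℝ}
    (hy : y ∈ adjoinSqrt (insert r P)) :
    ∃ a ∈ adjoinSqrt P, ∃ b ∈ adjoinSqrt P, a + b * √(r : ℝ) = y := by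
  rw [← restrictScalars_adjoin_sqrt_eq_adjoinSqrt_insert, mem_restrictScalars] at hy
  obtain ⟨a, b, hab⟩ := exists_add_mul_eq_of_mem_adjoin_simple (c := (r : adjoinSqrt P))
    (by simp) hy
  exact ⟨a, a.2, b, b.2, hab⟩

open Finset in
theorem prod_sqrt_notMem_adjoinSqrt {P Q : Finset ℕ} (hP : ∀ p ∈ P, p.Prime)
    (hQ : ∀ p ∈ Q, p.Prime) (hQP : ¬ Q ⊆ P) : ∏ p ∈ Q, √(p : ℝ) ∉ adjoinSqrt P := by
  induction P using Finset.induction_on generalizing Q with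
  | empty =>
    rw [adjoinSqrt_empty, mem_bot]
    exact irrational_prod_sqrt_of_prime hQ (nonempty_iff_ne_empty.mpr (mt subset_empty.mpr hQP))
  | @insert r P hrP ih =>
    have hr : r.Prime := hP r (mem_insert_self r P)
    replace hP : ∀ p ∈ P, p.Prime := fun p hp => hP p (mem_insert_of_mem hp)
    have hsqrt_r : √(r : ℝ) ∉ adjoinSqrt P := by
      simpa using ih hP (Q := {r}) (by simpa using hr) (by simpa using hrP)
    have hr_mem : (r : ℝ) ∈ adjoinSqrt P := IntermediateField.natCast_mem _ r
    intro hmem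
    obtain ⟨a, ha, b, hb, hab⟩ := exists_add_mul_sqrt_eq_of_mem_adjoinSqrt_insert hmem
    -- squaring `a + b √r = ∏ √p` leaves `2ab √r` as the only term outside `adjoinSqrt P`
    have hsq : (a ^ 2 + b ^ 2 * r - ∏ p ∈ Q, (p : ℝ)) + 2 * a * b * √(r : ℝ) = 0 := by
      have hsqrt_sq : ∀ n : ℕ, √(n : ℝ) ^ 2 = n := fun n => Real.sq_sqrt n.cast_nonneg
      rw [← prod_congr rfl fun p _ => hsqrt_sq p, prod_pow, ← hab]
      linear_combination (-b ^ 2) * hsqrt_sq r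
    have hQ_mem : ∏ p ∈ Q, (p : ℝ) ∈ adjoinSqrt P :=
      prod_mem fun p _ => IntermediateField.natCast_mem _ p
    have hab0 : 2 * a * b = 0 := eq_zero_of_add_mul_eq_zero_of_notMem
      (sub_mem (add_mem (pow_mem ha 2) (mul_mem (pow_mem hb 2) hr_mem)) hQ_mem)
      (mul_mem (mul_mem (ofNat_mem _ 2) ha) hb) hsqrt_r hsq
    rcases mul_eq_zero.mp hab0 with ha0 | hb0
    · rw [mul_eq_zero, or_iff_right two_ne_zero] at ha0
      subst ha0
      by_cases hrQ : r ∈ Q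
      · refine ih hP (Q := Q.erase r) (fun p hp => hQ p (mem_of_mem_erase hp))
          (fun h => hQP (subset_insert_iff.mpr h)) ?_
        have hsqrt_r0 : √(r : ℝ) ≠ 0 := Real.sqrt_ne_zero'.mpr (by exact_mod_cast hr.pos)
        rw [← mul_prod_erase Q _ hrQ, zero_add, mul_comm] at hab
        rwa [mul_left_cancel₀ hsqrt_r0 hab] at hb
      · refine ih hP (Q := insert r Q) (by simpa [hr] using hQ)
          (fun h => hrP (h (mem_insert_self r Q))) ?_
        rw [prod_insert hrQ, ← hab, zero_add, mul_left_comm, ← sq, Real.sq_sqrt r.cast_nonneg]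
        exact mul_mem hb hr_mem
    · refine ih hP hQ (fun h => hQP (h.trans (subset_insert _ _))) ?_
      rwa [← hab, hb0, zero_mul, add_zero]

open Finset in
theorem linearIndepOn_prod_sqrt_powerset {P : Finset ℕ} (hP : ∀ p ∈ P, p.Prime) :
    LinearIndepOn ℚ (fun Q : Finset ℕ => ∏ p ∈ Q, √(p : ℝ)) (P.powerset : Set (Finset ℕ)) := by
  classical
  rw [linearIndepOn_finset_iff]
  induction P using Finset.induction_on with
  | empty => simp
  | @insert r P hrP ih =>
    have hsqrt_r : √(r : ℝ) ∉ adjoinSqrt P := by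
      simpa using prod_sqrt_notMem_adjoinSqrt (Q := {r}) (fun p hp => hP p (mem_insert_of_mem hp))
        (by simpa using hP r (mem_insert_self r P)) (by simpa using hrP)
    replace ih := ih fun p hp => hP p (mem_insert_of_mem hp)
    intro f hf
    set A := ∑ Q ∈ P.powerset, f Q • ∏ p ∈ Q, √(p : ℝ)
    set B := ∑ Q ∈ P.powerset, f (insert r Q) • ∏ p ∈ Q, √(p : ℝ)
    have hAB : A + B * √(r : ℝ) = 0 := by
      rw [← hf, sum_powerset_insert hrP, sum_mul]
      congr 1
      refine sum_congr rfl fun Q hQ => ?_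
      rw [prod_insert (notMem_mono (mem_powerset.mp hQ) hrP), smul_mul_assoc, mul_comm]
    have hA : A ∈ adjoinSqrt P :=
      sum_mem fun Q hQ => smul_mem _ (prod_sqrt_mem_adjoinSqrt (mem_powerset.mp hQ))
    have hB : B ∈ adjoinSqrt P :=
      sum_mem fun Q hQ => smul_mem _ (prod_sqrt_mem_adjoinSqrt (mem_powerset.mp hQ))
    have hB0 : B = 0 := eq_zero_of_add_mul_eq_zero_of_notMem hA hB hsqrt_r hAB
    have hA0 : A = 0 := by simpa [hB0] using hAB
    intro Q hQ
    rw [mem_powerset] at hQ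
    by_cases hrQ : r ∈ Q
    · rw [← insert_erase hrQ]
      exact ih (fun Q => f (insert r Q)) hB0 _ (mem_powerset.mpr (subset_insert_iff.mp hQ))
    · exact ih f hA0 Q (mem_powerset.mpr ((subset_insert_iff_of_notMem hrQ).mp hQ))

theorem sqrt_eq_prod_sqrt_primeFactors {n : ℕ} (hn : Squarefree n) :
    √(n : ℝ) = ∏ p ∈ n.primeFactors, √(p : ℝ) := by
  rw [← Real.sqrt_prod _ fun _ _ => Nat.cast_nonneg _, ← Nat.cast_prod,
    Nat.prod_primeFactors_of_squarefree hn]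

theorem linearIndependent_sqrt_squarefree :
    LinearIndependent ℚ (fun n : {n : ℕ // Squarefree n} => √(n : ℝ)) := by
  rw [linearIndependent_iff_finset_linearIndependent]
  intro s
  set P := s.biUnion fun n => n.1.primeFactors
  have hP : ∀ p ∈ P, p.Prime := by
    simp only [P, Finset.mem_biUnion]
    rintro p ⟨n, -, hp⟩
    exact Nat.prime_of_mem_primeFactors hp
  let g : s → (P.powerset : Set (Finset ℕ)) := fun n => ⟨n.1.1.primeFactors,
    Finset.mem_powerset.mpr (Finset.subset_biUnion_of_mem (fun n => n.1.primeFactors) n.2)⟩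
  have hg : Function.Injective g := by
    intro m n hmn
    have := congrArg (fun Q : (P.powerset : Set (Finset ℕ)) => ∏ p ∈ Q.1, p) hmn
    simp only [g, Nat.prod_primeFactors_of_squarefree m.1.2,
      Nat.prod_primeFactors_of_squarefree n.1.2] at this
    exact Subtype.ext (Subtype.ext this)
  convert (linearIndepOn_prod_sqrt_powerset hP).comp g hg using 1
  funext n
  exact sqrt_eq_prod_sqrt_primeFactors n.1.2

theorem besicovitch_sqrt_linear_independence_general (s : ℕ) (h : Fin s → ℕ)
    (hsf : ∀ i, Squarefree (h i))
    (hinj : Function.Injective h) (q : Fin s → ℚ)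
    (heq : ∑ i, (q i : ℝ) * Real.sqrt (h i) = 0) :
    ∀ i, q i = 0 := by
  have hli := linearIndependent_sqrt_squarefree.comp (fun i => ⟨h i, hsf i⟩)
    fun i j hij => hinj (congrArg Subtype.val hij)
  exact Fintype.linearIndependent_iff.mp hli q
    (by simpa only [Rat.smul_def, Function.comp_apply] using heq)

theorem besicovitch_sqrt_linear_independence (s : ℕ) (h : Fin s → ℕ)
    (hsf : ∀ i, Squarefree (h i)) (hpos : ∀ i, 0 < h i)
    (hinj : Function.Injective h) (q : Fin s → ℚ)
    (heq : ∑ i, (q i : ℝ) * Real.sqrt (h i) = 0) :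
    ∀ i, q i = 0 :=
  besicovitch_sqrt_linear_independence_general s h hsf hinj q heq
end

section
/- Let 1 ≤ l < k and define d*(n) = (−1)^n d(n), where d is the divisor function. Then s_{k;l}(d*) = s_{k;l}(d), i.e., Σ (−1)^{n_1+...+n_k} d(n_1)⋯d(n_k)/(n_1⋯n_k)^{3/4} = Σ d(n_1)⋯d(n_k)/(n_1⋯n_k)^{3/4}, both sums over k-tuples with √n_1 + ... + √n_l = √n_{l+1} + ... + √n_k. -/
/-! Squaring `√n₁ + ⋯ + √n_l = √n_{l+1} + ⋯ + √n_k` shows that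
`(n_{l+1} + ⋯ + n_k) - (n₁ + ⋯ + n_l)` is twice a difference of sums of products `√nᵢ √nⱼ`,
i.e. twice an algebraic integer. Being rational, half of it is an integer, so `n₁ + ⋯ + n_k` is
even and every sign `(-1) ^ (n₁ + ⋯ + n_k)` is `1`. -/

theorem Int.dvd_of_isIntegral_div {K : Type*} [Field K] [CharZero K] {a n : ℤ} (hn : n ≠ 0)
    (h : IsIntegral ℤ ((a : K) / n)) : n ∣ a := by
  obtain ⟨k, hk⟩ := (h.exists_int_iff_exists_rat).mp ⟨a / n, by push_cast; rfl⟩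
  refine ⟨k, ?_⟩
  have hn' : (n : K) ≠ 0 := by exact_mod_cast hn
  rw [div_eq_iff hn'] at hk
  exact_mod_cast hk.trans (mul_comm _ _)

theorem exists_sq_sum_eq_sum_sq_add_two_mul {R σ ι : Type*} [CommSemiring R] [SetLike σ R]
    [SubsemiringClass σ R] (S : σ) (s : Finset ι) {g : ι → R} (hg : ∀ i ∈ s, g i ∈ S) :
    ∃ c ∈ S, (∑ i ∈ s, g i) ^ 2 = ∑ i ∈ s, g i ^ 2 + 2 * c := by
  classical
  induction s using Finset.induction with
  | empty => exact ⟨0, zero_mem S, by simp⟩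
  | @insert a t ha ih =>
    obtain ⟨c, hcS, hc⟩ := ih fun i hi ↦ hg i (Finset.mem_insert_of_mem hi)
    refine ⟨g a * ∑ i ∈ t, g i + c, add_mem (mul_mem (hg a (Finset.mem_insert_self a t))
      (sum_mem fun i hi ↦ hg i (Finset.mem_insert_of_mem hi))) hcS, ?_⟩
    rw [Finset.sum_insert ha, Finset.sum_insert ha, add_sq, hc]
    ring

theorem Real.isIntegral_sqrt_natCast (m : ℕ) : IsIntegral ℤ (√(m : ℝ)) :=
  IsIntegral.of_pow two_pos <| by
    rw [Real.sq_sqrt m.cast_nonneg]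
    exact isIntegral_natCast m

theorem Nat.sum_modEq_two_of_sum_sqrt_eq {ι : Type*} {A B : Finset ι} {m : ι → ℕ}
    (h : ∑ j ∈ A, √(m j : ℝ) = ∑ j ∈ B, √(m j : ℝ)) :
    ∑ j ∈ A, m j ≡ ∑ j ∈ B, m j [MOD 2] := by
  have hint : ∀ j, √(m j : ℝ) ∈ integralClosure ℤ ℝ := fun j ↦ Real.isIntegral_sqrt_natCast (m j)
  obtain ⟨a, ha, hA⟩ := exists_sq_sum_eq_sum_sq_add_two_mul _ A fun j _ ↦ hint j
  obtain ⟨b, hb, hB⟩ := exists_sq_sum_eq_sum_sq_add_two_mul _ B fun j _ ↦ hint j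
  simp only [Real.sq_sqrt (Nat.cast_nonneg _)] at hA hB
  have hdiff :
      ((((∑ j ∈ B, m j : ℕ) : ℤ) - (∑ j ∈ A, m j : ℕ) : ℤ) : ℝ) / ((2 : ℤ) : ℝ) = a - b := by
    push_cast
    linarith [h ▸ hA]
  rw [Nat.modEq_iff_dvd]
  exact Int.dvd_of_isIntegral_div two_ne_zero (hdiff ▸ sub_mem ha hb)

theorem Nat.even_sum_of_sum_sqrt_filter_eq {ι : Type*} [Fintype ι] (p : ι → Prop)
    [DecidablePred p] {m : ι → ℕ}
    (h : ∑ j ∈ Finset.univ.filter p, √(m j : ℝ) = ∑ j ∈ Finset.univ.filter (¬p ·), √(m j : ℝ)) :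
    Even (∑ j, m j) := by
  rw [← Finset.sum_filter_add_sum_filter_not Finset.univ p, Nat.even_add, Nat.even_iff,
    Nat.even_iff, Nat.sum_modEq_two_of_sum_sqrt_eq h]

theorem skl_dstar_eq_skl_d_general (k l : ℕ) :
    (∑' n : {n : Fin k → ℕ // (∀ j, 0 < n j) ∧
        ∑ j ∈ Finset.univ.filter (fun j : Fin k => (j:ℕ) < l), Real.sqrt (n j) =
        ∑ j ∈ Finset.univ.filter (fun j : Fin k => l ≤ (j:ℕ)), Real.sqrt (n j)},
      (-1:ℝ) ^ (∑ j, n.1 j) *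
        ((∏ j, ((n.1 j).divisors.card : ℝ)) / (∏ j, (n.1 j : ℝ)) ^ ((3:ℝ)/4))) =
    (∑' n : {n : Fin k → ℕ // (∀ j, 0 < n j) ∧
        ∑ j ∈ Finset.univ.filter (fun j : Fin k => (j:ℕ) < l), Real.sqrt (n j) =
        ∑ j ∈ Finset.univ.filter (fun j : Fin k => l ≤ (j:ℕ)), Real.sqrt (n j)},
      (∏ j, ((n.1 j).divisors.card : ℝ)) / (∏ j, (n.1 j : ℝ)) ^ ((3:ℝ)/4)) := by
  refine tsum_congr fun n ↦ ?_
  have hsqrt := n.2.2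
  simp only [← not_lt] at hsqrt
  rw [(Nat.even_sum_of_sum_sqrt_filter_eq _ hsqrt).neg_one_pow, one_mul]

theorem skl_dstar_eq_skl_d (k l : ℕ) (hl : 1 ≤ l) (hlk : l < k) :
    (∑' n : {n : Fin k → ℕ // (∀ j, 0 < n j) ∧
        ∑ j ∈ Finset.univ.filter (fun j : Fin k => (j:ℕ) < l), Real.sqrt (n j) =
        ∑ j ∈ Finset.univ.filter (fun j : Fin k => l ≤ (j:ℕ)), Real.sqrt (n j)},
      (-1:ℝ) ^ (∑ j, n.1 j) *
        ((∏ j, ((n.1 j).divisors.card : ℝ)) / (∏ j, (n.1 j : ℝ)) ^ ((3:ℝ)/4))) =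
    (∑' n : {n : Fin k → ℕ // (∀ j, 0 < n j) ∧
        ∑ j ∈ Finset.univ.filter (fun j : Fin k => (j:ℕ) < l), Real.sqrt (n j) =
        ∑ j ∈ Finset.univ.filter (fun j : Fin k => l ≤ (j:ℕ)), Real.sqrt (n j)},
      (∏ j, ((n.1 j).divisors.card : ℝ)) / (∏ j, (n.1 j : ℝ)) ^ ((3:ℝ)/4)) :=
  skl_dstar_eq_skl_d_general k l
end

section
/- For y ≥ 2 and T ≥ 2 with y < T, Σ_{y < m < n ≤ T} d(n)d(m) / ((mn)^{3/4}(√n − √m)) ≤ C(ε)·T^ε for every ε > 0, where d is the divisor function. -/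
/-!
The divisor bound `d(n) ≤ C_δ n^δ` comes from `d(n) = ∏ (a_p + 1)` with
`a + 1 ≤ (p^δ)^a` as soon as `p^δ ≥ 2`, and `a + 1 ≤ B_δ (p^δ)^a` (Bernoulli) for the boundedly many
smaller primes; so the numerators are `O(T^(ε/2))`. Since `√n - √m ≥ (n - m) / (2√n)` and
`m √n ≤ (mn)^(3/4)`, each denominator is at least `m (n - m) / 2`. Finally
`∑_{m < n ≤ N} 1 / (m (n - m)) ≤ H_N² ≤ (1 + log T)² = O(T^(ε/2))`.
-/

open Real Finset

lemma add_one_le_mul_pow {x : ℝ} (hx : 1 < x) (a : ℕ) :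
    (a + 1 : ℝ) ≤ (1 + (x - 1)⁻¹) * x ^ a := by
  have hx' : 0 < x - 1 := sub_pos.mpr hx
  have bernoulli : 1 + a * (x - 1) ≤ x ^ a := by
    simpa using one_add_mul_le_pow (by linarith : (-2 : ℝ) ≤ x - 1) a
  calc (a + 1 : ℝ) ≤ (1 + (x - 1)⁻¹) * (1 + a * (x - 1)) := by
        have expand : (1 + (x - 1)⁻¹) * (1 + a * (x - 1)) = a + 1 + (x - 1)⁻¹ + a * (x - 1) := by
          field_simp
          ring
        rw [expand]
        have : 0 ≤ (x - 1)⁻¹ + a * (x - 1) := by positivity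
        linarith
    _ ≤ (1 + (x - 1)⁻¹) * x ^ a := by gcongr

lemma add_one_le_pow {x : ℝ} (hx : 2 ≤ x) (a : ℕ) : (a + 1 : ℝ) ≤ x ^ a := by
  have bernoulli : 1 + a * (x - 1) ≤ x ^ a := by
    simpa using one_add_mul_le_pow (by linarith : (-2 : ℝ) ≤ x - 1) a
  nlinarith [(Nat.cast_nonneg a : (0 : ℝ) ≤ a)]

lemma add_one_le_ite_mul_rpow_pow {δ : ℝ} (hδ : 0 < δ) {p : ℕ} (hp : 2 ≤ p) (a : ℕ) :
    (a + 1 : ℝ) ≤ (if p < ⌈(2 : ℝ) ^ δ⁻¹⌉₊ then 1 + (2 ^ δ - 1)⁻¹ else 1) * ((p : ℝ) ^ δ) ^ a := by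
  have hp : (2 : ℝ) ≤ p := by exact_mod_cast hp
  split_ifs with hpK
  · have h2δ : 1 < (2 : ℝ) ^ δ := one_lt_rpow (by norm_num) hδ
    have h2p : (2 : ℝ) ^ δ ≤ (p : ℝ) ^ δ := by gcongr
    calc (a + 1 : ℝ) ≤ (1 + ((p : ℝ) ^ δ - 1)⁻¹) * ((p : ℝ) ^ δ) ^ a :=
          add_one_le_mul_pow (h2δ.trans_le h2p) a
      _ ≤ (1 + (2 ^ δ - 1)⁻¹) * ((p : ℝ) ^ δ) ^ a := by
          gcongr
  · have hKp : (2 : ℝ) ^ δ⁻¹ ≤ p := Nat.ceil_le.mp (not_lt.mp hpK)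
    have h2p : 2 ≤ (p : ℝ) ^ δ := by
      calc (2 : ℝ) = ((2 : ℝ) ^ δ⁻¹) ^ δ := by
            rw [← rpow_mul (by norm_num), inv_mul_cancel₀ hδ.ne', rpow_one]
        _ ≤ (p : ℝ) ^ δ := by gcongr
    rw [one_mul]
    exact add_one_le_pow h2p a

lemma rpow_eq_prod_primeFactors {n : ℕ} (hn : n ≠ 0) (δ : ℝ) :
    (n : ℝ) ^ δ = ∏ p ∈ n.primeFactors, ((p : ℝ) ^ δ) ^ n.factorization p := by
  conv_lhs => rw [← Nat.prod_factorization_pow_eq_self hn]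
  rw [Finsupp.prod, Nat.support_factorization, Nat.cast_prod,
    ← finsetProd_rpow _ _ fun p _ => by positivity]
  refine prod_congr rfl fun p _ => ?_
  rw [Nat.cast_pow, ← rpow_natCast, ← rpow_natCast, ← rpow_mul (by positivity),
    ← rpow_mul (by positivity), mul_comm]

theorem exists_card_divisors_le_mul_rpow {δ : ℝ} (hδ : 0 < δ) :
    ∃ C > 0, ∀ n : ℕ, n ≠ 0 → (#n.divisors : ℝ) ≤ C * (n : ℝ) ^ δ := by
  set K := ⌈(2 : ℝ) ^ δ⁻¹⌉₊
  set B : ℝ := 1 + (2 ^ δ - 1)⁻¹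
  have hB : 1 ≤ B := by
    have : 1 < (2 : ℝ) ^ δ := one_lt_rpow (by norm_num) hδ
    have : 0 ≤ ((2 : ℝ) ^ δ - 1)⁻¹ := inv_nonneg.mpr (by linarith)
    linarith
  refine ⟨B ^ K, by positivity, fun n hn => ?_⟩
  have hsmall : ∏ p ∈ n.primeFactors, (if p < K then B else 1) ≤ B ^ K := by
    rw [← prod_filter, prod_const]
    refine pow_le_pow_right₀ hB ?_
    calc #(n.primeFactors.filter (· < K)) ≤ #(range K) :=
          card_le_card fun p hp => mem_range.mpr (mem_filter.mp hp).2
      _ = K := card_range K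
  calc (#n.divisors : ℝ) = ∏ p ∈ n.primeFactors, ((n.factorization p : ℝ) + 1) := by
        rw [Nat.card_divisors hn]; push_cast; rfl
    _ ≤ ∏ p ∈ n.primeFactors, (if p < K then B else 1) * ((p : ℝ) ^ δ) ^ n.factorization p :=
        prod_le_prod (fun _ _ => by positivity) fun p hp =>
          add_one_le_ite_mul_rpow_pow hδ (Nat.prime_of_mem_primeFactors hp).two_le _
    _ ≤ B ^ K * (n : ℝ) ^ δ := by
        rw [prod_mul_distrib, ← rpow_eq_prod_primeFactors hn]
        gcongr

lemma sub_div_two_mul_sqrt_le_sqrt_sub {a b : ℝ} (ha : 0 ≤ a) (hab : a ≤ b) :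
    (b - a) / (2 * √b) ≤ √b - √a := by
  have hsqrt : √a ≤ √b := sqrt_le_sqrt hab
  refine div_le_of_le_mul₀ (by positivity) (by linarith) ?_
  calc b - a = (√b - √a) * (√b + √a) := by
        rw [mul_comm, ← sq_sub_sq, sq_sqrt ha, sq_sqrt (ha.trans hab)]
    _ ≤ (√b - √a) * (2 * √b) := by
        gcongr
        linarith

lemma mul_sqrt_le_mul_rpow_three_div_four {a b : ℝ} (ha : 0 ≤ a) (hab : a ≤ b) :
    a * √b ≤ (a * b) ^ (3 / 4 : ℝ) := by
  have hb : 0 ≤ b := ha.trans hab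
  calc a * √b = a ^ (3 / 4 : ℝ) * a ^ (1 / 4 : ℝ) * b ^ (1 / 2 : ℝ) := by
        rw [← rpow_add' ha (by norm_num), sqrt_eq_rpow]; norm_num
    _ ≤ a ^ (3 / 4 : ℝ) * b ^ (1 / 4 : ℝ) * b ^ (1 / 2 : ℝ) := by gcongr
    _ = (a * b) ^ (3 / 4 : ℝ) := by
        rw [mul_assoc, ← rpow_add' hb (by norm_num), mul_rpow ha hb]; norm_num

lemma mul_sub_div_two_le_rpow_mul_sqrt_sub {a b : ℝ} (ha : 0 ≤ a) (hab : a ≤ b) :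
    a * (b - a) / 2 ≤ (a * b) ^ (3 / 4 : ℝ) * (√b - √a) := by
  rcases (ha.trans hab).eq_or_lt with hb | hb
  · simp [← hb, show a = 0 by linarith]
  calc a * (b - a) / 2 = a * √b * ((b - a) / (2 * √b)) := by
        field_simp
    _ ≤ (a * b) ^ (3 / 4 : ℝ) * (√b - √a) := by
        gcongr
        · exact mul_sqrt_le_mul_rpow_three_div_four ha hab
        · exact sub_div_two_mul_sqrt_le_sqrt_sub ha hab

lemma harmonic_eq_sum_Icc_real (N : ℕ) : (harmonic N : ℝ) = ∑ k ∈ Icc 1 N, (k : ℝ)⁻¹ := by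
  simp [harmonic_eq_sum_Icc]

lemma sum_Ioc_inv_sub_le_harmonic (m N : ℕ) :
    ∑ n ∈ Ioc m N, ((n : ℝ) - m)⁻¹ ≤ harmonic N := by
  have hshift : ∑ n ∈ Ioc m N, ((n : ℝ) - m)⁻¹ = ∑ k ∈ (Ioc m N).image (· - m), (k : ℝ)⁻¹ := by
    rw [sum_image fun n hn n' hn' h => by simp only [coe_Ioc, Set.mem_Ioc] at hn hn'; omega]
    refine sum_congr rfl fun n hn => ?_
    rw [Nat.cast_sub (mem_Ioc.mp hn).1.le]
  rw [hshift, harmonic_eq_sum_Icc_real]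
  refine sum_le_sum_of_subset_of_nonneg (fun k hk => ?_) fun _ _ _ => by positivity
  obtain ⟨n, hn, rfl⟩ := mem_image.mp hk
  simp only [mem_Ioc, mem_Icc] at hn ⊢
  omega

lemma sum_sum_ite_inv_mul_sub_le_harmonic_sq (N : ℕ) :
    ∑ n ∈ Icc 1 N, ∑ m ∈ Icc 1 N, (if m < n then ((m : ℝ) * (n - m))⁻¹ else 0)
      ≤ (harmonic N : ℝ) ^ 2 := by
  rw [sum_comm]
  calc ∑ m ∈ Icc 1 N, ∑ n ∈ Icc 1 N, (if m < n then ((m : ℝ) * (n - m))⁻¹ else 0)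
      = ∑ m ∈ Icc 1 N, (m : ℝ)⁻¹ * ∑ n ∈ Ioc m N, ((n : ℝ) - m)⁻¹ := by
        refine sum_congr rfl fun m hm => ?_
        rw [← sum_filter, mul_sum]
        refine sum_congr ?_ fun n _ => mul_inv _ _
        ext n; simp only [mem_filter, mem_Icc, mem_Ioc] at hm ⊢; omega
    _ ≤ ∑ m ∈ Icc 1 N, (m : ℝ)⁻¹ * harmonic N := by
        gcongr with m
        exact sum_Ioc_inv_sub_le_harmonic m N
    _ = (harmonic N : ℝ) ^ 2 := by
        rw [← sum_mul, ← harmonic_eq_sum_Icc_real, sq]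

lemma harmonic_le_mul_rpow (N : ℕ) {β : ℝ} (hβ : 0 < β) :
    (harmonic N : ℝ) ≤ (1 + β⁻¹) * (N : ℝ) ^ β := by
  rcases N.eq_zero_or_pos with rfl | hN
  · simp [zero_rpow hβ.ne']
  have hNβ : 1 ≤ (N : ℝ) ^ β := one_le_rpow (by exact_mod_cast hN) hβ.le
  calc (harmonic N : ℝ) ≤ 1 + log N := harmonic_le_one_add_log N
    _ ≤ (N : ℝ) ^ β + (N : ℝ) ^ β / β := by
        gcongr
        exact log_le_rpow_div N.cast_nonneg hβ
    _ = (1 + β⁻¹) * (N : ℝ) ^ β := by ring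

lemma div_rpow_mul_sqrt_sub_le {a b c : ℝ} (hc : 0 ≤ c) (ha : 0 < a) (hab : a < b) :
    c / ((a * b) ^ (3 / 4 : ℝ) * (√b - √a)) ≤ 2 * c * (a * (b - a))⁻¹ := by
  have hpos : 0 < a * (b - a) / 2 := by have := sub_pos.mpr hab; positivity
  calc c / ((a * b) ^ (3 / 4 : ℝ) * (√b - √a)) ≤ c / (a * (b - a) / 2) :=
        div_le_div_of_nonneg_left hc hpos (mul_sub_div_two_le_rpow_mul_sqrt_sub ha.le hab.le)
    _ = 2 * c * (a * (b - a))⁻¹ := by field_simp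

lemma offdiagonal_term_le {y D : ℝ} {m n : ℕ} (hm : 1 ≤ m)
    (hdn : (#n.divisors : ℝ) ≤ D) (hdm : (#m.divisors : ℝ) ≤ D) :
    (if y < (m : ℝ) ∧ m < n then
        (#n.divisors : ℝ) * #m.divisors / (((m : ℝ) * n) ^ (3 / 4 : ℝ) * (√n - √m))
      else 0) ≤ 2 * (D * D) * (if m < n then ((m : ℝ) * (n - m))⁻¹ else 0) := by
  rcases le_or_gt n m with hnm | hmn
  · simp [hnm.not_gt]
  have hmn' : (m : ℝ) < n := by exact_mod_cast hmn
  have hm' : (0 : ℝ) < m := by exact_mod_cast hm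
  have hweight : 0 < ((m : ℝ) * (n - m))⁻¹ := by
    have := sub_pos.mpr hmn'
    positivity
  have hD : 0 ≤ D := hdn.trans' (by positivity)
  rw [if_pos hmn]
  split_ifs
  · calc _ ≤ 2 * ((#n.divisors : ℝ) * #m.divisors) * ((m : ℝ) * (n - m))⁻¹ :=
          div_rpow_mul_sqrt_sub_le (by positivity) hm' hmn'
      _ ≤ 2 * (D * D) * ((m : ℝ) * (n - m))⁻¹ := by gcongr
  · positivity

theorem offdiagonal_sum_bound : ∀ ε > (0:ℝ), ∃ C > (0:ℝ),
    ∀ y T : ℝ, 2 ≤ y → 2 ≤ T → y < T →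
    ∑ n ∈ Finset.Icc 1 ⌊T⌋₊, ∑ m ∈ Finset.Icc 1 ⌊T⌋₊,
      (if y < (m:ℝ) ∧ m < n then
        (n.divisors.card : ℝ) * (m.divisors.card : ℝ) /
          (((m:ℝ) * (n:ℝ)) ^ ((3:ℝ)/4) * (Real.sqrt n - Real.sqrt m))
      else 0) ≤ C * T ^ ε := by
  intro ε hε
  obtain ⟨C, hC, hd⟩ := exists_card_divisors_le_mul_rpow (δ := ε / 4) (by positivity)
  refine ⟨2 * C ^ 2 * (1 + (ε / 4)⁻¹) ^ 2, by positivity, fun y T _ hT _ => ?_⟩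
  set N := ⌊T⌋₊
  have hNT : (N : ℝ) ≤ T := Nat.floor_le (by linarith)
  set D := C * T ^ (ε / 4)
  have hdiv : ∀ k ∈ Icc 1 N, (#k.divisors : ℝ) ≤ D := fun k hk => by
    have hk := mem_Icc.mp hk
    calc (#k.divisors : ℝ) ≤ C * (k : ℝ) ^ (ε / 4) := hd k (by omega)
      _ ≤ C * T ^ (ε / 4) := by gcongr; exact (Nat.cast_le.mpr hk.2).trans hNT
  have hH0 : 0 ≤ (harmonic N : ℝ) := by rw [harmonic_eq_sum_Icc_real]; positivity
  have hH : (harmonic N : ℝ) ≤ (1 + (ε / 4)⁻¹) * T ^ (ε / 4) :=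
    (harmonic_le_mul_rpow N (β := ε / 4) (by positivity)).trans (by gcongr)
  have hT4 : T ^ ε = (T ^ (ε / 4)) ^ 4 := by
    rw [← rpow_mul_natCast (by linarith)]; norm_num
  calc _ ≤ ∑ n ∈ Icc 1 N, ∑ m ∈ Icc 1 N,
          2 * (D * D) * (if m < n then ((m : ℝ) * (n - m))⁻¹ else 0) := by
        gcongr with n hn m hm
        exact offdiagonal_term_le (mem_Icc.mp hm).1 (hdiv n hn) (hdiv m hm)
    _ = 2 * (D * D) * ∑ n ∈ Icc 1 N, ∑ m ∈ Icc 1 N,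
          (if m < n then ((m : ℝ) * (n - m))⁻¹ else 0) := by
        simp only [mul_sum]
    _ ≤ 2 * (D * D) * ((1 + (ε / 4)⁻¹) * T ^ (ε / 4)) ^ 2 := by
        gcongr
        exact (sum_sum_ite_inv_mul_sub_le_harmonic_sq N).trans (by gcongr)
    _ = _ := by rw [hT4]; ring
end
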